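/- arXiv:2302.05178 — 2 statements merged into one kernel-verified Lean document; each statement's English description precedes it below -/
import Mathlib

section
/- For every l ∈ ℝ, every x ∈ L², every continuous function Φ : [0,1] → L² satisfying the Marcus integral equation Φ(t) = x + l ∫₀ᵗ ḡ(Φ(s)) ds for all t ∈ [0,1], and every t ∈ [0,1], the energy identity (1/2)‖Φ(t)‖_{L²}² = (1/2)‖x‖_{L²}² + l ∫₀ᵗ ⟨h, Φ(s)⟩_{L²} ds holds (here h is regarded as an element of L²); in particular the cross-product part of ḡ does not contribute, since ⟨v × h, v⟩_{L²} = 0 for all v ∈ L². -/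
/-!
Along a solution of `Φ = x + l ∫ ḡ(Φ)`, `d/dt ‖Φ‖² = 2l ⟪ḡ(Φ), Φ⟫`, and the cross-product part of
`ḡ(Φ)` is pointwise orthogonal to `Φ`, so only `⟪h, Φ⟫` survives. Differentiating requires `ḡ ∘ Φ`
to be continuous, which holds because `ḡ` is Lipschitz with constant `‖h‖_∞`.
-/

open MeasureTheory
open scoped RealInnerProductSpace ENNReal

/-- The cross product on `ℝ³ = EuclideanSpace ℝ (Fin 3)`. -/
noncomputable def cross3 (a b : EuclideanSpace ℝ (Fin 3)) : EuclideanSpace ℝ (Fin 3) :=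
  WithLp.toLp 2 ![a 1 * b 2 - a 2 * b 1, a 2 * b 0 - a 0 * b 2, a 0 * b 1 - a 1 * b 0]

open Set
open scoped Matrix

section CrossProduct

lemma cross3_eq_crossProduct (a b : EuclideanSpace ℝ (Fin 3)) :
    cross3 a b = WithLp.toLp 2 (a.ofLp ⨯₃ b.ofLp) := rfl

lemma inner_cross3_self_left (a b : EuclideanSpace ℝ (Fin 3)) : ⟪cross3 a b, a⟫ = 0 := by
  rw [EuclideanSpace.inner_eq_star_dotProduct, star_trivial, cross3_eq_crossProduct,
    dot_self_cross]

lemma cross3_sub_left (a a' b : EuclideanSpace ℝ (Fin 3)) :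
    cross3 (a - a') b = cross3 a b - cross3 a' b := by
  simp only [cross3_eq_crossProduct, WithLp.ofLp_sub, map_sub, LinearMap.sub_apply,
    WithLp.toLp_sub]

lemma norm_cross3_sq (a b : EuclideanSpace ℝ (Fin 3)) :
    ‖cross3 a b‖ ^ 2 = ‖a‖ ^ 2 * ‖b‖ ^ 2 - ⟪a, b⟫ ^ 2 := by
  simp only [← real_inner_self_eq_norm_sq, cross3_eq_crossProduct,
    EuclideanSpace.inner_eq_star_dotProduct, star_trivial, cross_dot_cross,
    dotProduct_comm b.ofLp a.ofLp]
  ring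

lemma norm_cross3_le (a b : EuclideanSpace ℝ (Fin 3)) : ‖cross3 a b‖ ≤ ‖a‖ * ‖b‖ := by
  refine le_of_sq_le_sq ?_ (by positivity)
  rw [norm_cross3_sq, mul_pow]
  nlinarith [sq_nonneg ⟪a, b⟫]

end CrossProduct

section Energy

variable {E : Type*} [NormedAddCommGroup E] [InnerProductSpace ℝ E] [CompleteSpace E]
  {Φ g : ℝ → E} {x : E} {T : ℝ}

lemma hasDerivAt_of_eq_add_integral (hg : ContinuousOn g (Icc 0 T))
    (hΦ : ∀ t ∈ Icc 0 T, Φ t = x + ∫ s in (0:ℝ)..t, g s) {s : ℝ} (hs : s ∈ Ioo 0 T) :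
    HasDerivAt Φ (g s) s := by
  have hnhds : Icc 0 T ∈ nhds s := Icc_mem_nhds hs.1 hs.2
  have hint : IntervalIntegrable g volume 0 s :=
    (hg.mono (Icc_subset_Icc le_rfl hs.2.le)).intervalIntegrable_of_Icc hs.1.le
  have hprim : HasDerivAt (fun u => ∫ r in (0:ℝ)..u, g r) (g s) s :=
    intervalIntegral.integral_hasDerivAt_right hint
      ((hg.mono Ioo_subset_Icc_self).stronglyMeasurableAtFilter isOpen_Ioo s hs)
      (hg.continuousAt hnhds)
  exact (hprim.const_add x).congr_of_eventuallyEq (Filter.eventually_of_mem hnhds hΦ)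

lemma norm_sq_eq_add_integral_inner (hΦc : ContinuousOn Φ (Icc 0 T))
    (hg : ContinuousOn g (Icc 0 T)) (hΦ : ∀ t ∈ Icc 0 T, Φ t = x + ∫ s in (0:ℝ)..t, g s)
    {t : ℝ} (ht : t ∈ Icc 0 T) :
    ‖Φ t‖ ^ 2 = ‖x‖ ^ 2 + 2 * ∫ s in (0:ℝ)..t, ⟪g s, Φ s⟫ := by
  have hsub : Icc 0 t ⊆ Icc 0 T := Icc_subset_Icc le_rfl ht.2
  have hΦ0 : Φ 0 = x := by simpa using hΦ 0 ⟨le_rfl, ht.1.trans ht.2⟩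
  have hderiv : ∀ s ∈ Ioo 0 t, HasDerivAt (fun u => ‖Φ u‖ ^ 2) (2 * ⟪g s, Φ s⟫) s := by
    intro s hs
    have hd := hasDerivAt_of_eq_add_integral hg hΦ ⟨hs.1, hs.2.trans_le ht.2⟩
    convert hd.norm_sq using 1
    rw [real_inner_comm]
  have hcont : ContinuousOn (fun s => 2 * ⟪g s, Φ s⟫) (Icc 0 t) :=
    continuousOn_const.mul ((hg.mono hsub).inner (hΦc.mono hsub))
  have hftc := intervalIntegral.integral_eq_sub_of_hasDerivAt_of_le
    (f := fun u => ‖Φ u‖ ^ 2) ht.1 ((hΦc.mono hsub).norm.pow 2) hderiv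
    (hcont.intervalIntegrable_of_Icc ht.1)
  rw [intervalIntegral.integral_const_mul, hΦ0] at hftc
  linarith

end Energy

section MarcusField

variable {α : Type*} [MeasurableSpace α] {μ : Measure α} {h : α → EuclideanSpace ℝ (Fin 3)}
  {G : Lp (EuclideanSpace ℝ (Fin 3)) 2 μ → Lp (EuclideanSpace ℝ (Fin 3)) 2 μ}

lemma inner_map_self_eq_of_ae_eq_cross3_add (hG : ∀ v, ∀ᵐ x ∂μ, G v x = cross3 (v x) (h x) + h x)
    {hL : Lp (EuclideanSpace ℝ (Fin 3)) 2 μ} (hhL : ⇑hL =ᵐ[μ] h)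
    (v : Lp (EuclideanSpace ℝ (Fin 3)) 2 μ) : ⟪G v, v⟫ = ⟪hL, v⟫ := by
  rw [L2.inner_def, L2.inner_def]
  refine integral_congr_ae ?_
  filter_upwards [hG v, hhL] with x hGx hLx
  rw [hGx, hLx, inner_add_left, inner_cross3_self_left, zero_add]

lemma lipschitzWith_of_ae_eq_cross3_add (hG : ∀ v, ∀ᵐ x ∂μ, G v x = cross3 (v x) (h x) + h x)
    (hbdd : MemLp h ∞ μ) : LipschitzWith (lpNorm h ∞ μ).toNNReal G := by
  refine LipschitzWith.of_dist_le_mul fun u v => ?_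
  rw [dist_eq_norm, dist_eq_norm, Real.coe_toNNReal _ lpNorm_nonneg]
  refine Lp.norm_le_mul_norm_of_ae_le_mul ?_
  filter_upwards [hG u, hG v, Lp.coeFn_sub (G u) (G v), Lp.coeFn_sub u v,
    ae_le_lpNorm_exponent_top hbdd] with x hGu hGv hGsub hsub hhx
  rw [hGsub, hsub, Pi.sub_apply, Pi.sub_apply, hGu, hGv, add_sub_add_right_eq_sub,
    ← cross3_sub_left]
  calc ‖cross3 (u x - v x) (h x)‖ ≤ ‖u x - v x‖ * ‖h x‖ := norm_cross3_le _ _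
    _ ≤ lpNorm h ∞ μ * ‖u x - v x‖ := by
      rw [mul_comm]; exact mul_le_mul_of_nonneg_right hhx (norm_nonneg _)

end MarcusField

theorem marcus_flow_energy_identity_general
    {𝒪 : Type*} [MeasurableSpace 𝒪] (μ : Measure 𝒪)
    (h : 𝒪 → EuclideanSpace ℝ (Fin 3)) (hbdd : MemLp h ⊤ μ)
    (gbar : Lp (EuclideanSpace ℝ (Fin 3)) 2 μ → Lp (EuclideanSpace ℝ (Fin 3)) 2 μ)
    (hgbar : ∀ v, ∀ᵐ x ∂μ, gbar v x = cross3 (v x) (h x) + h x)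
    (hL : Lp (EuclideanSpace ℝ (Fin 3)) 2 μ) (hhL : ⇑hL =ᵐ[μ] h) :
    (∀ (l : ℝ) (x : Lp (EuclideanSpace ℝ (Fin 3)) 2 μ)
        (Φ : ℝ → Lp (EuclideanSpace ℝ (Fin 3)) 2 μ),
        ContinuousOn Φ (Set.Icc 0 1) →
        (∀ t ∈ Set.Icc (0:ℝ) 1, Φ t = x + l • ∫ s in (0:ℝ)..t, gbar (Φ s)) →
        ∀ t ∈ Set.Icc (0:ℝ) 1,
          (1/2) * ‖Φ t‖ ^ 2 = (1/2) * ‖x‖ ^ 2 + l * ∫ s in (0:ℝ)..t, ⟪hL, Φ s⟫)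
    ∧ ∀ v : Lp (EuclideanSpace ℝ (Fin 3)) 2 μ,
        ∫ x, ⟪cross3 (v x) (h x), v x⟫ ∂μ = 0 := by
  refine ⟨fun l x Φ hΦc hΦ t ht => ?_, fun v => by simp [inner_cross3_self_left]⟩
  have hg : ContinuousOn (fun s => l • gbar (Φ s)) (Icc 0 1) :=
    ((lipschitzWith_of_ae_eq_cross3_add hgbar hbdd).continuous.comp_continuousOn hΦc).const_smul l
  have hΦ' : ∀ t ∈ Icc (0:ℝ) 1, Φ t = x + ∫ s in (0:ℝ)..t, l • gbar (Φ s) := by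
    simpa only [intervalIntegral.integral_smul] using hΦ
  have hinner : ∀ s, ⟪l • gbar (Φ s), Φ s⟫ = l * ⟪hL, Φ s⟫ := fun s => by
    rw [real_inner_smul_left, inner_map_self_eq_of_ae_eq_cross3_add hgbar hhL]
  rw [norm_sq_eq_add_integral_inner hΦc hg hΦ' ht]
  simp only [hinner, intervalIntegral.integral_const_mul]
  ring

/-- energy identity for the Marcus flow; the cross-product part of `ḡ`
does not contribute since `⟨v × h, v⟩_{L²} = 0`. -/
theorem marcus_flow_energy_identity
    {𝒪 : Type*} [MeasurableSpace 𝒪] (μ : Measure 𝒪) [IsFiniteMeasure μ]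
    (h : 𝒪 → EuclideanSpace ℝ (Fin 3)) (hmeas : Measurable h) (hbdd : MemLp h ⊤ μ)
    (gbar : Lp (EuclideanSpace ℝ (Fin 3)) 2 μ → Lp (EuclideanSpace ℝ (Fin 3)) 2 μ)
    (hgbar : ∀ v, ∀ᵐ x ∂μ, gbar v x = cross3 (v x) (h x) + h x)
    (hL : Lp (EuclideanSpace ℝ (Fin 3)) 2 μ) (hhL : ⇑hL =ᵐ[μ] h) :
    (∀ (l : ℝ) (x : Lp (EuclideanSpace ℝ (Fin 3)) 2 μ)
        (Φ : ℝ → Lp (EuclideanSpace ℝ (Fin 3)) 2 μ),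
        ContinuousOn Φ (Set.Icc 0 1) →
        (∀ t ∈ Set.Icc (0:ℝ) 1, Φ t = x + l • ∫ s in (0:ℝ)..t, gbar (Φ s)) →
        ∀ t ∈ Set.Icc (0:ℝ) 1,
          (1/2) * ‖Φ t‖ ^ 2 = (1/2) * ‖x‖ ^ 2 + l * ∫ s in (0:ℝ)..t, ⟪hL, Φ s⟫)
    ∧ ∀ v : Lp (EuclideanSpace ℝ (Fin 3)) 2 μ,
        ∫ x, ⟪cross3 (v x) (h x), v x⟫ ∂μ = 0 :=
  marcus_flow_energy_identity_general μ h hbdd gbar hgbar hL hhL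
end

section
/- If f ∈ ℋ and ∫_B f(l)² ν(dl) < ∞, then for every K ∈ ℕ one has sup_{θ ∈ 𝒮^K} ∫₀^T ∫_B f(l) |θ(t,l) − 1| ν(dl) dt < ∞; that is, there is a finite constant C_K (depending only on f, ν, T and K) bounding ∫₀^T ∫_B f(l) |θ(t,l) − 1| ν(dl) dt simultaneously for all θ ∈ 𝒮^K. -/
open MeasureTheory
open scoped ENNReal

lemma sqrtIneq {t : ℝ} (ht : 0 ≤ t) : (Real.sqrt t - 1)^2 ≤ t * Real.log t - t + 1 := by
  rcases ht.eq_or_lt with h | h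
  · simp [← h]
  · set x := Real.sqrt t with hx
    have hx0 : 0 < x := Real.sqrt_pos.2 h
    have hxt : x ^ 2 = t := Real.sq_sqrt ht
    have hlog : Real.log (x ^ 2) = 2 * Real.log x := by
      rw [Real.log_pow]; push_cast; ring
    have hl : 1 - x⁻¹ ≤ Real.log x := by
      have := Real.log_le_sub_one_of_pos (inv_pos.2 hx0)
      rw [Real.log_inv] at this; linarith
    have h2 : x * x⁻¹ = 1 := mul_inv_cancel₀ hx0.ne'
    conv_rhs => rw [← hxt, hlog]
    nlinarith [mul_le_mul_of_nonneg_left hl (sq_nonneg x), sq_nonneg x, hx0.le]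

lemma youngIneq (a : ℝ) {b : ℝ} (hb : 0 ≤ b) :
    a * b ≤ Real.exp a - 1 + (b * Real.log b - b + 1) := by
  rcases hb.eq_or_lt with h | h
  · simp [← h]; positivity
  · have h1 := Real.add_one_le_exp (a - Real.log b)
    have h2 : Real.exp (a - Real.log b) = Real.exp a / b := by
      rw [Real.exp_sub, Real.exp_log h]
    have h3 := mul_le_mul_of_nonneg_right h1 h.le
    rw [h2, div_mul_cancel₀ _ h.ne'] at h3
    nlinarith

lemma pointwiseIneq {δ c t : ℝ} (hδ : 0 < δ) (hc : 0 ≤ c) (ht : 0 ≤ t) :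
    c * |t - 1| ≤ (2 + 1/δ) * (t * Real.log t - t + 1) + c^2
      + (1/δ) * (if 1 ≤ c then Real.exp (δ * c^2) else 0) := by
  have hh : 0 ≤ t * Real.log t - t + 1 := le_trans (sq_nonneg _) (sqrtIneq ht)
  have hδ' : 0 < 1/δ := by positivity
  by_cases h1c : 1 ≤ c
  · rw [if_pos h1c]
    have habs : |t - 1| ≤ t + 1 := abs_le.2 ⟨by linarith, by linarith⟩
    have hy := youngIneq (δ * c) ht
    have hcc : c ≤ c^2 := by nlinarith
    have hexp : Real.exp (δ * c) ≤ Real.exp (δ * c^2) :=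
      Real.exp_le_exp.2 (by nlinarith [mul_le_mul_of_nonneg_left hcc hδ.le])
    have key : c * t ≤ (1/δ) * Real.exp (δ * c^2) + (1/δ) * (t * Real.log t - t + 1) := by
      have h4 : δ * (c * t) ≤ Real.exp (δ * c^2) + (t * Real.log t - t + 1) := by
        nlinarith
      have := mul_le_mul_of_nonneg_left h4 hδ'.le
      calc c * t = (1/δ) * (δ * (c * t)) := by field_simp
        _ ≤ (1/δ) * (Real.exp (δ * c^2) + (t * Real.log t - t + 1)) := this
        _ = (1/δ) * Real.exp (δ * c^2) + (1/δ) * (t * Real.log t - t + 1) := by ring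
    have := mul_le_mul_of_nonneg_left habs hc
    nlinarith
  · rw [if_neg h1c]
    have hc1 : c ≤ 1 := le_of_not_ge h1c
    set s := Real.sqrt t with hs
    have hs0 : 0 ≤ s := Real.sqrt_nonneg t
    have hst : s ^ 2 = t := Real.sq_sqrt ht
    set a := |s - 1| with ha
    have ha0 : 0 ≤ a := abs_nonneg _
    have ha2 : a ^ 2 ≤ t * Real.log t - t + 1 := by
      rw [ha, sq_abs]; exact sqrtIneq ht
    have h5 : |t - 1| = a * (s + 1) := by
      rw [← hst, show s^2 - 1 = (s-1)*(s+1) by ring, abs_mul, ha,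
        abs_of_pos (by linarith : (0:ℝ) < s + 1)]
    have habs : |t - 1| ≤ a^2 + 2*a := by
      rw [h5]
      nlinarith [le_abs_self (s - 1)]
    have := mul_le_mul_of_nonneg_left habs hc
    nlinarith [sq_nonneg (a - c), mul_le_mul_of_nonneg_left ha2 hc, mul_nonneg hδ'.le hh]

/-- if `f ∈ ℋ` and `∫_B f² dν < ∞`, then for every `K ∈ ℕ` the quantity
`∫₀^T ∫_B f(l) |θ(t,l) − 1| ν(dl) dt` is bounded uniformly over all `θ ∈ 𝒮^K`. -/
theorem uniform_bound_on_entropy_class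
    {B : Type*} [MeasurableSpace B] (ν : Measure B) [SigmaFinite ν]
    (T : ℝ) (hT : 0 < T)
    (f : B → ℝ) (hf0 : ∀ l, 0 ≤ f l) (hfmeas : Measurable f)
    (hfH : ∃ δ : ℝ, 0 < δ ∧ ∀ Γ : Set B, MeasurableSet Γ → ν Γ < ⊤ →
      ∫⁻ l in Γ, ENNReal.ofReal (Real.exp (δ * f l ^ 2)) ∂ν < ⊤)
    (hf2 : ∫⁻ l, ENNReal.ofReal (f l ^ 2) ∂ν < ⊤)
    (K : ℕ) :
    ∃ C : ℝ≥0∞, C < ⊤ ∧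
      ∀ θ : ℝ → B → ℝ, Measurable (Function.uncurry θ) → (∀ t l, 0 ≤ θ t l) →
        (∫⁻ t in Set.Icc (0:ℝ) T,
            ∫⁻ l, ENNReal.ofReal (θ t l * Real.log (θ t l) - θ t l + 1) ∂ν ≤ (K : ℝ≥0∞)) →
        ∫⁻ t in Set.Icc (0:ℝ) T,
            ∫⁻ l, ENNReal.ofReal (f l * |θ t l - 1|) ∂ν ≤ C := by
  obtain ⟨δ, hδ, hH⟩ := hfH
  set Γ : Set B := {l | 1 ≤ f l} with hΓdef
  have hΓm : MeasurableSet Γ := measurableSet_le measurable_const hfmeas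
  have hνΓ : ν Γ < ⊤ := by
    have h1 : ν Γ = ∫⁻ _ in Γ, 1 ∂ν := (setLIntegral_one Γ).symm
    have h2 : ∫⁻ _ in Γ, (1:ℝ≥0∞) ∂ν ≤ ∫⁻ l in Γ, ENNReal.ofReal (f l ^ 2) ∂ν := by
      refine setLIntegral_mono' hΓm fun l hl => ?_
      exact ENNReal.one_le_ofReal.2 (by nlinarith [hl.out])
    have h3 : ∫⁻ l in Γ, ENNReal.ofReal (f l ^ 2) ∂ν ≤ ∫⁻ l, ENNReal.ofReal (f l ^ 2) ∂ν :=
      setLIntegral_le_lintegral _ _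
    exact lt_of_le_of_lt (h1 ▸ h2.trans h3) hf2
  have hG : ∫⁻ l in Γ, ENNReal.ofReal (Real.exp (δ * f l ^ 2)) ∂ν < ⊤ := hH Γ hΓm hνΓ
  set c₁ : ℝ≥0∞ := ENNReal.ofReal (2 + 1/δ) with hc₁
  set c₂ : ℝ≥0∞ := ENNReal.ofReal (1/δ) with hc₂
  set F2 : ℝ≥0∞ := ∫⁻ l, ENNReal.ofReal (f l ^ 2) ∂ν with hF2
  set G : ℝ≥0∞ := ∫⁻ l in Γ, ENNReal.ofReal (Real.exp (δ * f l ^ 2)) ∂ν with hGdef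
  set D : ℝ≥0∞ := F2 + c₂ * G with hD
  have hDlt : D < ⊤ :=
    ENNReal.add_lt_top.2 ⟨hf2, ENNReal.mul_lt_top ENNReal.ofReal_lt_top hG⟩
  refine ⟨c₁ * K + D * ENNReal.ofReal T, ?_, ?_⟩
  · exact ENNReal.add_lt_top.2
      ⟨ENNReal.mul_lt_top ENNReal.ofReal_lt_top (ENNReal.natCast_lt_top K),
       ENNReal.mul_lt_top hDlt ENNReal.ofReal_lt_top⟩
  intro θ hθ hθ0 hent
  have hθt : ∀ t, Measurable (θ t) := fun t => hθ.comp measurable_prodMk_left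
  set ind : B → ℝ≥0∞ := Γ.indicator fun l => ENNReal.ofReal (Real.exp (δ * f l ^ 2)) with hind
  have hpt : ∀ t l, ENNReal.ofReal (f l * |θ t l - 1|) ≤
      c₁ * ENNReal.ofReal (θ t l * Real.log (θ t l) - θ t l + 1)
      + (ENNReal.ofReal (f l ^ 2) + c₂ * ind l) := by
    intro t l
    have hr := pointwiseIneq hδ (hf0 l) (hθ0 t l)
    have hH0 : 0 ≤ θ t l * Real.log (θ t l) - θ t l + 1 :=
      le_trans (sq_nonneg _) (sqrtIneq (hθ0 t l))
    have hite : (0:ℝ) ≤ if 1 ≤ f l then Real.exp (δ * f l ^ 2) else 0 := by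
      split_ifs
      · exact (Real.exp_pos _).le
      · exact le_refl 0
    have hindl : ind l = ENNReal.ofReal (if 1 ≤ f l then Real.exp (δ * f l ^ 2) else 0) := by
      by_cases h : 1 ≤ f l
      · rw [hind, Set.indicator_of_mem (by exact h), if_pos h]
      · rw [hind, Set.indicator_of_notMem (by exact h), if_neg h, ENNReal.ofReal_zero]
    rw [hindl]
    calc ENNReal.ofReal (f l * |θ t l - 1|)
        ≤ ENNReal.ofReal ((2 + 1/δ) * (θ t l * Real.log (θ t l) - θ t l + 1) + f l ^ 2
            + (1/δ) * (if 1 ≤ f l then Real.exp (δ * f l ^ 2) else 0)) :=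
          ENNReal.ofReal_le_ofReal hr
      _ = c₁ * ENNReal.ofReal (θ t l * Real.log (θ t l) - θ t l + 1)
          + (ENNReal.ofReal (f l ^ 2)
            + c₂ * ENNReal.ofReal (if 1 ≤ f l then Real.exp (δ * f l ^ 2) else 0)) := by
          rw [ENNReal.ofReal_add (by positivity) (by positivity),
            ENNReal.ofReal_add (by positivity) (by positivity),
            ENNReal.ofReal_mul (by positivity), ENNReal.ofReal_mul (by positivity),
            add_assoc]
  have m1 : Measurable fun p : ℝ × B => ENNReal.ofReal
      (Function.uncurry θ p * Real.log (Function.uncurry θ p) - Function.uncurry θ p + 1) :=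
    (((hθ.mul (Real.measurable_log.comp hθ)).sub hθ).add_const 1).ennreal_ofReal
  have mΨ : Measurable fun t => ∫⁻ l, ENNReal.ofReal
      (θ t l * Real.log (θ t l) - θ t l + 1) ∂ν := m1.lintegral_prod_right'
  have m2 : Measurable fun l => ENNReal.ofReal (f l ^ 2) :=
    ((hfmeas.pow_const 2)).ennreal_ofReal
  have m3 : Measurable ind :=
    Measurable.indicator
      ((Real.measurable_exp.comp ((hfmeas.pow_const 2).const_mul δ)).ennreal_ofReal) hΓm
  have hinner : ∀ t, ∫⁻ l, ENNReal.ofReal (f l * |θ t l - 1|) ∂ν ≤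
      c₁ * (∫⁻ l, ENNReal.ofReal (θ t l * Real.log (θ t l) - θ t l + 1) ∂ν) + D := by
    intro t
    have m1t : Measurable fun l => ENNReal.ofReal
        (θ t l * Real.log (θ t l) - θ t l + 1) :=
      ((((hθt t).mul (Real.measurable_log.comp (hθt t))).sub (hθt t)).add_const 1).ennreal_ofReal
    calc ∫⁻ l, ENNReal.ofReal (f l * |θ t l - 1|) ∂ν
        ≤ ∫⁻ l, (c₁ * ENNReal.ofReal (θ t l * Real.log (θ t l) - θ t l + 1)
            + (ENNReal.ofReal (f l ^ 2) + c₂ * ind l)) ∂ν := lintegral_mono (hpt t)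
      _ = c₁ * (∫⁻ l, ENNReal.ofReal (θ t l * Real.log (θ t l) - θ t l + 1) ∂ν)
          + (F2 + c₂ * (∫⁻ l, ind l ∂ν)) := by
          rw [lintegral_add_left (m1t.const_mul c₁), lintegral_const_mul c₁ m1t,
            lintegral_add_left m2, lintegral_const_mul c₂ m3]
      _ = c₁ * (∫⁻ l, ENNReal.ofReal (θ t l * Real.log (θ t l) - θ t l + 1) ∂ν) + D := by
          rw [hD, hGdef, hind, lintegral_indicator hΓm]
  calc ∫⁻ t in Set.Icc (0:ℝ) T, ∫⁻ l, ENNReal.ofReal (f l * |θ t l - 1|) ∂ν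
      ≤ ∫⁻ t in Set.Icc (0:ℝ) T,
          (c₁ * (∫⁻ l, ENNReal.ofReal (θ t l * Real.log (θ t l) - θ t l + 1) ∂ν) + D) :=
        lintegral_mono fun t => hinner t
    _ = c₁ * (∫⁻ t in Set.Icc (0:ℝ) T,
          ∫⁻ l, ENNReal.ofReal (θ t l * Real.log (θ t l) - θ t l + 1) ∂ν)
        + D * volume (Set.Icc (0:ℝ) T) := by
        rw [lintegral_add_left (mΨ.const_mul c₁), lintegral_const_mul c₁ mΨ,
          setLIntegral_const]
    _ ≤ c₁ * K + D * ENNReal.ofReal T := by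
        rw [Real.volume_Icc, sub_zero]
        gcongr
end
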